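/- Oscillation estimate for Riesz potentials away from the support: if 0 < α < d, 0 < β ≤ d, Q is an open cube centered at x₀, f is measurable with supp f ⊆ (2Q)^c and I_α f ∈ L¹_loc(ℝ^d), then I_α f is continuous on Q and there exists c ∈ ℝ with ∫_Q |I_α f − c| dH^β_∞ ≤ C ℓ(Q)^β M_α f(x₀). -/

import Mathlib

open MeasureTheory Set
open scoped ENNReal NNReal

noncomputable section

/-- `ℝ^d` with the Euclidean metric. -/
abbrev Rd (d : ℕ) := EuclideanSpace ℝ (Fin d)

/-- Coerce a plain function to a point of `ℝ^d`. -/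
def toRd (d : ℕ) (a : Fin d → ℝ) : Rd d := WithLp.toLp 2 a

/-- The normalization constant `ω_β = π^{β/2}/Γ(β/2+1)`. -/
def omegaConst (β : ℝ) : ℝ := Real.pi ^ (β / 2) / Real.Gamma (β / 2 + 1)

/-- The Hausdorff content `H^β_∞` in `ℝ^d`, via countable covers by balls. -/
def hContent (d : ℕ) (β : ℝ) (E : Set (Rd d)) : ℝ≥0∞ :=
  ⨅ (c : ℕ → Rd d × ℝ) (_ : E ⊆ ⋃ i, Metric.ball (c i).1 (c i).2),
    ∑' i, ENNReal.ofReal (omegaConst β * (c i).2 ^ β)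

/-- The Choquet integral of a real-valued (nonnegative) function `g` over `Ω`
with respect to a set function `H`. -/
def choquet (d : ℕ) (H : Set (Rd d) → ℝ≥0∞) (Ω : Set (Rd d)) (g : Rd d → ℝ) : ℝ≥0∞ :=
  ∫⁻ t in Set.Ioi (0 : ℝ), H {x | x ∈ Ω ∧ t < g x}

/-- The Choquet integral of an `ℝ≥0∞`-valued function `g` over `Ω`
with respect to a set function `H`. -/
def choquetE (d : ℕ) (H : Set (Rd d) → ℝ≥0∞) (Ω : Set (Rd d)) (g : Rd d → ℝ≥0∞) : ℝ≥0∞ :=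
  ∫⁻ t in Set.Ioi (0 : ℝ), H {x | x ∈ Ω ∧ ENNReal.ofReal t < g x}

/-- Closed axis-parallel cube with corner `a` and side length `l`. -/
def cubeSet (d : ℕ) (a : Fin d → ℝ) (l : ℝ) : Set (Rd d) :=
  {y | ∀ i, a i ≤ y i ∧ y i ≤ a i + l}

/-- Open axis-parallel cube with corner `a` and side length `l`. -/
def cubeO (d : ℕ) (a : Fin d → ℝ) (l : ℝ) : Set (Rd d) :=
  {y | ∀ i, a i < y i ∧ y i < a i + l}

/-- Side length of a dyadic cube of generation `k` in the lattice with unit size `l₀`. -/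
def dSide (l₀ : ℝ) (k : ℤ) : ℝ := l₀ * 2 ^ k

/-- The dyadic cube, indexed by generation `k : ℤ` and position `m : Fin d → ℤ`,
of the dyadic lattice `D(Q₀)` generated by the cube `Q₀` with corner `a₀` and
side length `l₀`. -/
def dSet (d : ℕ) (a₀ : Fin d → ℝ) (l₀ : ℝ) (Q : ℤ × (Fin d → ℤ)) : Set (Rd d) :=
  {y | ∀ i, a₀ i + dSide l₀ Q.1 * (Q.2 i : ℝ) ≤ y i ∧
        y i < a₀ i + dSide l₀ Q.1 * ((Q.2 i : ℝ) + 1)}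

/-- The dyadic Hausdorff content `H^{β,Q₀}_∞`, via countable covers by dyadic cubes. -/
def dContent (d : ℕ) (β : ℝ) (a₀ : Fin d → ℝ) (l₀ : ℝ) (E : Set (Rd d)) : ℝ≥0∞ :=
  ⨅ (c : ℕ → ℤ × (Fin d → ℤ)) (_ : E ⊆ ⋃ i, dSet d a₀ l₀ (c i)),
    ∑' i, ENNReal.ofReal (dSide l₀ (c i).1 ^ β)

/-- The dyadic maximal function associated with `H^{β,Q₀}_∞`. -/
def dMax (d : ℕ) (β : ℝ) (a₀ : Fin d → ℝ) (l₀ : ℝ) (f : Rd d → ℝ) (x : Rd d) : ℝ≥0∞ :=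
  ⨆ (Q : ℤ × (Fin d → ℤ)) (_ : x ∈ dSet d a₀ l₀ Q),
    choquet d (dContent d β a₀ l₀) (dSet d a₀ l₀ Q) (fun y => |f y|)
      / ENNReal.ofReal (dSide l₀ Q.1 ^ β)

/-- The dyadic `β`-dimensional sharp maximal function `M^{#}_{β,Q₀}`. -/
def dSharp (d : ℕ) (β : ℝ) (a₀ : Fin d → ℝ) (l₀ : ℝ) (f : Rd d → ℝ) (x : Rd d) : ℝ≥0∞ :=
  ⨆ (Q : ℤ × (Fin d → ℤ)) (_ : x ∈ dSet d a₀ l₀ Q),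
    ⨅ (c : ℝ),
      choquet d (dContent d β a₀ l₀) (dSet d a₀ l₀ Q) (fun y => |f y - c|)
        / ENNReal.ofReal (dSide l₀ Q.1 ^ β)

/-- The `β`-dimensional sharp maximal function `M^{#}_β`, over all axis-parallel cubes. -/
def sharpMax (d : ℕ) (β : ℝ) (f : Rd d → ℝ) (x : Rd d) : ℝ≥0∞ :=
  ⨆ (a : Fin d → ℝ) (l : ℝ) (_ : 0 < l) (_ : x ∈ cubeSet d a l),
    ⨅ (c : ℝ),
      choquet d (hContent d β) (cubeSet d a l) (fun y => |f y - c|) / ENNReal.ofReal (l ^ β)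

/-- The `β`-dimensional maximal operator `M_{H^β_∞}` over balls. -/
def ballMax (d : ℕ) (β : ℝ) (f : Rd d → ℝ) (x : Rd d) : ℝ≥0∞ :=
  ⨆ (r : ℝ) (_ : 0 < r),
    choquet d (hContent d β) (Metric.ball x r) (fun y => |f y|)
      / hContent d β (Metric.ball x r)

/-- The Riesz normalization constant `γ(α)`. -/
def rieszConst (d : ℕ) (α : ℝ) : ℝ :=
  Real.pi ^ ((d : ℝ) / 2) * 2 ^ α * Real.Gamma (α / 2) / Real.Gamma (((d : ℝ) - α) / 2)

/-- The Riesz potential `I_α μ` of a measure. -/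
def rieszM (d : ℕ) (α : ℝ) (μ : Measure (Rd d)) (x : Rd d) : ℝ≥0∞ :=
  (ENNReal.ofReal (rieszConst d α))⁻¹ * ∫⁻ y, ENNReal.ofReal (dist x y ^ (α - (d : ℝ))) ∂μ

/-- The (real-valued) Riesz potential `I_α f` of a function. -/
def rieszR (d : ℕ) (α : ℝ) (f : Rd d → ℝ) (x : Rd d) : ℝ :=
  (rieszConst d α)⁻¹ * ∫ y, f y * dist x y ^ (α - (d : ℝ))

/-- The fractional maximal function `M_α μ` of a measure. -/
def fracMaxM (d : ℕ) (α : ℝ) (μ : Measure (Rd d)) (x : Rd d) : ℝ≥0∞ :=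
  ⨆ (a : Fin d → ℝ) (l : ℝ) (_ : 0 < l) (_ : x ∈ cubeSet d a l),
    μ (cubeSet d a l) * ENNReal.ofReal (l ^ (α - (d : ℝ)))

/-- The fractional maximal function `M_α f` of a function. -/
def fracMaxF (d : ℕ) (α : ℝ) (f : Rd d → ℝ) (x : Rd d) : ℝ≥0∞ :=
  ⨆ (a : Fin d → ℝ) (l : ℝ) (_ : 0 < l) (_ : x ∈ cubeSet d a l),
    (∫⁻ y in cubeSet d a l, ENNReal.ofReal |f y|) * ENNReal.ofReal (l ^ (α - (d : ℝ)))

/-- The weak `L^{p,∞}(H^β_∞)` quasinorm. -/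
def weakNorm (d : ℕ) (β : ℝ) (p : ℝ) (g : Rd d → ℝ≥0∞) : ℝ≥0∞ :=
  ⨆ (t : ℝ) (_ : 0 < t),
    ENNReal.ofReal t * hContent d β {x | ENNReal.ofReal t < g x} ^ (1 / p)

/-- The local Morrey norm `‖μ‖_{M^β(Ω)}`. -/
def morreyNorm (d : ℕ) (β : ℝ) (μ : Measure (Rd d)) (Ω : Set (Rd d)) : ℝ≥0∞ :=
  ⨆ (x : Rd d) (_ : x ∈ Ω) (r : ℝ) (_ : 0 < r),
    μ (Metric.ball x r ∩ Ω) / ENNReal.ofReal (r ^ β)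

/-- Generation-`k` cell at position `m` of a dyadic grid with generation offsets `o`. -/
def gcell (d : ℕ) (o : ℤ → Fin d → ℝ) (k : ℤ) (m : Fin d → ℤ) : Set (Rd d) :=
  {y | ∀ i, o k i + 2 ^ k * (m i : ℝ) ≤ y i ∧ y i < o k i + 2 ^ k * ((m i : ℝ) + 1)}

/-- A dyadic grid in `ℝ^d`: each generation `k` consists of half-open cubes of side `2^k`
partitioning `ℝ^d`, and consecutive generations are nested. -/
structure DyadicGrid (d : ℕ) where
  o : ℤ → Fin d → ℝ
  nested : ∀ k m, ∃ m', gcell d o k m ⊆ gcell d o (k + 1) m'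

/-- The dyadic Riesz potential `I^D_α μ` with respect to a dyadic grid. -/
def dyadicRiesz (d : ℕ) (G : DyadicGrid d) (α : ℝ) (μ : Measure (Rd d)) (x : Rd d) : ℝ≥0∞ :=
  ∑' p : ℤ × (Fin d → ℤ),
    Set.indicator (gcell d G.o p.1 p.2)
      (fun _ => μ (gcell d G.o p.1 p.2) * ENNReal.ofReal (((2 : ℝ) ^ p.1) ^ (α - (d : ℝ)))) x

/-- The exponential on `ℝ≥0∞`. -/
def expE (t : ℝ≥0∞) : ℝ≥0∞ := if t = ∞ then ∞ else ENNReal.ofReal (Real.exp t.toReal)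

/-!
Every point `y` of the support of `f` lies at distance `≥ ℓ` from the centre `x₀` of `Q`, so the
distances from `y` to the points of `Q` are all comparable to `|x₀ - y|` (up to the factor
`1 + √d`). The mean value theorem for `t ↦ t ^ (α - d)` then makes `I_α f` Lipschitz on `Q` with
constant `≲ ∫ |f y| |x₀ - y| ^ (α - d - 1) dy`, and cutting this integral along the dyadic balls
`B(x₀, 2 ^ (k + 1) ℓ)` bounds it by `≲ ℓ⁻¹ M_α f(x₀)`. Finally the Choquet integral of
`|I_α f - I_α f(x₀)|` over `Q` is at most `H^β_∞(Q) · sup_Q |I_α f - I_α f(x₀)| ≲ ℓ ^ β M_α f(x₀)`.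
-/

lemma MeasureTheory.ofReal_integral_le_lintegral_ofReal {X : Type*} [MeasurableSpace X]
    {μ : Measure X} {f : X → ℝ} (hf : 0 ≤ᵐ[μ] f) :
    ENNReal.ofReal (∫ x, f x ∂μ) ≤ ∫⁻ x, ENNReal.ofReal (f x) ∂μ := by
  by_cases hi : Integrable f μ
  · exact (ofReal_integral_eq_lintegral_ofReal hi hf).le
  · simp [integral_undef hi]

lemma rpow_le_rpow_mul_of_le_mul {a b c γ : ℝ} (ha : 0 < a) (hc : 0 < c) (hab : a ≤ c * b)
    (hγ : γ ≤ 0) : b ^ γ ≤ c ^ (-γ) * a ^ γ := by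
  have h := Real.rpow_le_rpow_of_nonpos (div_pos ha hc) ((div_le_iff₀' hc).2 hab) hγ
  rwa [Real.div_rpow ha.le hc.le, div_eq_inv_mul, ← Real.rpow_neg hc.le] at h

lemma abs_rpow_sub_rpow_le {a b γ : ℝ} (ha : 0 < a) (hb : 0 < b) (hγ : γ ≤ 1) :
    |a ^ γ - b ^ γ| ≤ |γ| * min a b ^ (γ - 1) * |a - b| := by
  have hm : 0 < min a b := lt_min ha hb
  have hderiv : ∀ t ∈ Ici (min a b),
      HasDerivWithinAt (fun t : ℝ => t ^ γ) (γ * t ^ (γ - 1)) (Ici (min a b)) t := fun t ht =>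
    (Real.hasDerivAt_rpow_const (Or.inl (hm.trans_le ht).ne')).hasDerivWithinAt
  have hbound : ∀ t ∈ Ici (min a b), ‖γ * t ^ (γ - 1)‖ ≤ |γ| * min a b ^ (γ - 1) := by
    intro t ht
    rw [norm_mul, Real.norm_eq_abs, Real.norm_of_nonneg (Real.rpow_nonneg (hm.trans_le ht).le _)]
    exact mul_le_mul_of_nonneg_left (Real.rpow_le_rpow_of_nonpos hm ht (by linarith))
      (abs_nonneg γ)
  simpa only [Real.norm_eq_abs] using (convex_Ici _).norm_image_sub_le_of_norm_hasDerivWithin_le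
    hderiv hbound (min_le_right a b) (min_le_left a b)

section RieszKernel

variable {E : Type*} [MetricSpace E]

lemma abs_rpow_dist_sub_rpow_dist_le {x x' x₀ y : E} {c γ : ℝ} (hc : 0 < c) (hγ : γ ≤ 1)
    (h₀ : 0 < dist x₀ y) (hx : dist x₀ y ≤ c * dist x y) (hx' : dist x₀ y ≤ c * dist x' y) :
    |dist x y ^ γ - dist x' y ^ γ| ≤ |γ| * c ^ (1 - γ) * dist x₀ y ^ (γ - 1) * dist x x' := by
  have hr : 0 < dist x y := pos_of_mul_pos_right (h₀.trans_le hx) hc.le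
  have hr' : 0 < dist x' y := pos_of_mul_pos_right (h₀.trans_le hx') hc.le
  have hmin : min (dist x y) (dist x' y) ^ (γ - 1) ≤ c ^ (1 - γ) * dist x₀ y ^ (γ - 1) := by
    simpa only [neg_sub] using rpow_le_rpow_mul_of_le_mul h₀ hc
      (by rw [mul_min_of_nonneg _ _ hc.le]; exact le_min hx hx') (by linarith : γ - 1 ≤ 0)
  calc |dist x y ^ γ - dist x' y ^ γ|
      ≤ |γ| * min (dist x y) (dist x' y) ^ (γ - 1) * |dist x y - dist x' y| :=
        abs_rpow_sub_rpow_le hr hr' hγ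
    _ ≤ |γ| * (c ^ (1 - γ) * dist x₀ y ^ (γ - 1)) * dist x x' := by
        gcongr
        exact abs_dist_sub_le x x' y
    _ = |γ| * c ^ (1 - γ) * dist x₀ y ^ (γ - 1) * dist x x' := by ring

variable [MeasurableSpace E] [OpensMeasurableSpace E] {μ : Measure E} {f : E → ℝ}

lemma MeasureTheory.Integrable.mul_rpow_dist_of_le_mul (hf : Measurable f) {x z : E} {c γ : ℝ}
    (hc : 0 < c) (hγ : γ ≤ 0) (hz : ∀ y, f y ≠ 0 → 0 < dist z y ∧ dist z y ≤ c * dist x y)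
    (hi : Integrable (fun y => f y * dist z y ^ γ) μ) :
    Integrable (fun y => f y * dist x y ^ γ) μ := by
  refine (hi.norm.const_mul (c ^ (-γ))).mono'
    (hf.mul ((continuous_const.dist continuous_id).measurable.pow_const γ)).aestronglyMeasurable
    (Filter.Eventually.of_forall fun y => ?_)
  by_cases hy : f y = 0
  · simp [hy]
  · obtain ⟨hpos, hle⟩ := hz y hy
    rw [norm_mul, norm_mul, Real.norm_of_nonneg (Real.rpow_nonneg hpos.le γ),
      Real.norm_of_nonneg (Real.rpow_nonneg dist_nonneg γ), mul_left_comm]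
    exact mul_le_mul_of_nonneg_left (rpow_le_rpow_mul_of_le_mul hpos hc hle hγ) (norm_nonneg _)

lemma MeasureTheory.Integrable.abs_mul_rpow_dist_sub_one (hf : Measurable f) {x₀ : E} {ρ γ : ℝ}
    (hρ : 0 < ρ) (hfar : ∀ y, f y ≠ 0 → ρ ≤ dist x₀ y)
    (hi : Integrable (fun y => f y * dist x₀ y ^ γ) μ) :
    Integrable (fun y => |f y| * dist x₀ y ^ (γ - 1)) μ := by
  refine (hi.norm.const_mul ρ⁻¹).mono'
    (hf.abs.mul ((continuous_const.dist continuous_id).measurable.pow_const _)).aestronglyMeasurable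
    (Filter.Eventually.of_forall fun y => ?_)
  by_cases hy : f y = 0
  · simp [hy]
  · have h₀ : 0 < dist x₀ y := hρ.trans_le (hfar y hy)
    rw [Real.norm_of_nonneg (by positivity), norm_mul, Real.norm_eq_abs,
      Real.norm_of_nonneg (by positivity), Real.rpow_sub_one h₀.ne', div_eq_mul_inv]
    calc |f y| * (dist x₀ y ^ γ * (dist x₀ y)⁻¹) = (dist x₀ y)⁻¹ * (|f y| * dist x₀ y ^ γ) := by
          ring
      _ ≤ ρ⁻¹ * (|f y| * dist x₀ y ^ γ) := by
          gcongr
          exact hfar y hy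

lemma abs_integral_mul_rpow_dist_sub_le (hf : Measurable f) {s : Set E} {x₀ : E} {c ρ γ : ℝ}
    (hc : 0 < c) (hρ : 0 < ρ) (hγ : γ ≤ 0) (hfar : ∀ y, f y ≠ 0 → ρ ≤ dist x₀ y)
    (hcomp : ∀ x ∈ s, ∀ y, f y ≠ 0 → dist x₀ y ≤ c * dist x y ∧ dist x y ≤ c * dist x₀ y)
    {x x' : E} (hx : x ∈ s) (hx' : x' ∈ s) :
    |∫ y, f y * dist x y ^ γ ∂μ - ∫ y, f y * dist x' y ^ γ ∂μ| ≤
      |γ| * c ^ (1 - γ) * (∫ y, |f y| * dist x₀ y ^ (γ - 1) ∂μ) * dist x x' := by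
  have hpos : ∀ y, f y ≠ 0 → 0 < dist x₀ y := fun y hy => hρ.trans_le (hfar y hy)
  by_cases hi : Integrable (fun y => f y * dist x₀ y ^ γ) μ
  · have hix : ∀ z ∈ s, Integrable (fun y => f y * dist z y ^ γ) μ := fun z hz =>
      hi.mul_rpow_dist_of_le_mul hf hc hγ fun y hy => ⟨hpos y hy, (hcomp z hz y hy).1⟩
    have hJ : Integrable (fun y => |f y| * dist x₀ y ^ (γ - 1)) μ :=
      hi.abs_mul_rpow_dist_sub_one hf hρ hfar
    calc |∫ y, f y * dist x y ^ γ ∂μ - ∫ y, f y * dist x' y ^ γ ∂μ|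
        = |∫ y, (f y * dist x y ^ γ - f y * dist x' y ^ γ) ∂μ| := by
          rw [integral_sub (hix x hx) (hix x' hx')]
      _ ≤ ∫ y, |f y * dist x y ^ γ - f y * dist x' y ^ γ| ∂μ := abs_integral_le_integral_abs
      _ ≤ ∫ y, (|γ| * c ^ (1 - γ) * dist x x') * (|f y| * dist x₀ y ^ (γ - 1)) ∂μ := by
          refine integral_mono ((hix x hx).sub (hix x' hx')).abs (hJ.const_mul _) fun y => ?_
          by_cases hy : f y = 0
          · simp [hy]
          · rw [← mul_sub, abs_mul]
            calc |f y| * |dist x y ^ γ - dist x' y ^ γ|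
                ≤ |f y| * (|γ| * c ^ (1 - γ) * dist x₀ y ^ (γ - 1) * dist x x') := by
                  gcongr
                  exact abs_rpow_dist_sub_rpow_dist_le hc (by linarith) (hpos y hy)
                    (hcomp x hx y hy).1 (hcomp x' hx' y hy).1
              _ = _ := by ring
      _ = |γ| * c ^ (1 - γ) * (∫ y, |f y| * dist x₀ y ^ (γ - 1) ∂μ) * dist x x' := by
          rw [integral_const_mul]
          ring
  · -- The Bochner integrals are then `0` at every point of `s`.
    have hni : ∀ z ∈ s, ¬Integrable (fun y => f y * dist z y ^ γ) μ := fun z hz hiz =>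
      hi (hiz.mul_rpow_dist_of_le_mul hf hc hγ fun y hy =>
        ⟨pos_of_mul_pos_right ((hpos y hy).trans_le (hcomp z hz y hy).1) hc.le,
          (hcomp z hz y hy).2⟩)
    rw [integral_undef (hni x hx), integral_undef (hni x' hx'), sub_zero, abs_zero]
    have : 0 ≤ ∫ y, |f y| * dist x₀ y ^ (γ - 1) ∂μ := integral_nonneg fun y => by positivity
    positivity

end RieszKernel

section Cubes

variable {d : ℕ}

lemma toRd_apply (a : Fin d → ℝ) (i : Fin d) : toRd d a i = a i := rfl

lemma abs_apply_sub_le_dist (x y : Rd d) (i : Fin d) : |x i - y i| ≤ dist x y := by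
  simpa only [Real.dist_eq] using PiLp.dist_apply_le x y i

lemma dist_le_sqrt_mul_of_forall_abs_apply_sub_le {x y : Rd d} {s : ℝ} (hs : 0 ≤ s)
    (h : ∀ i, |x i - y i| ≤ s) : dist x y ≤ √d * s := by
  rw [EuclideanSpace.dist_eq]
  calc √(∑ i, dist (x i) (y i) ^ 2) ≤ √(∑ _i : Fin d, s ^ 2) := by
        gcongr with i _
        rw [Real.dist_eq]
        exact h i
    _ = √d * s := by simp [Real.sqrt_mul, Real.sqrt_sq hs]

lemma dist_center_le_of_mem_cubeO {a : Fin d → ℝ} {l : ℝ} {x : Rd d} (hl : 0 < l)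
    (hx : x ∈ cubeO d a l) : dist x (toRd d fun i => a i + l / 2) ≤ √d * (l / 2) := by
  refine dist_le_sqrt_mul_of_forall_abs_apply_sub_le (by positivity) fun i => ?_
  rw [toRd_apply, abs_le]
  constructor <;> linarith [(hx i).1, (hx i).2]

lemma center_mem_cubeO {a : Fin d → ℝ} {l : ℝ} (hl : 0 < l) :
    (toRd d fun i => a i + l / 2) ∈ cubeO d a l := fun i => by
  rw [toRd_apply]
  constructor <;> linarith

lemma cubeO_subset_ball {a : Fin d → ℝ} {l : ℝ} (hd : 0 < d) (hl : 0 < l) :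
    cubeO d a l ⊆ Metric.ball (toRd d fun i => a i + l / 2) (√d * l) := fun x hx => by
  have : 0 < √d := Real.sqrt_pos.2 (Nat.cast_pos.2 hd)
  rw [Metric.mem_ball]
  nlinarith [dist_center_le_of_mem_cubeO hl hx]

lemma ball_subset_cubeSet (x : Rd d) (r : ℝ) :
    Metric.ball x r ⊆ cubeSet d (fun i => x i - r) (2 * r) := fun y hy i => by
  have := (abs_apply_sub_le_dist y x i).trans_lt (Metric.mem_ball.1 hy)
  rw [abs_lt] at this
  constructor <;> linarith

lemma dist_comparable_of_mem_cubeO_of_notMem {a : Fin d → ℝ} {l : ℝ} {x y : Rd d}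
    (hx : x ∈ cubeO d a l) (hy : y ∉ cubeO d (fun i => a i - l / 2) (2 * l)) :
    l ≤ dist (toRd d fun i => a i + l / 2) y ∧
      dist (toRd d fun i => a i + l / 2) y ≤ (1 + √d) * dist x y ∧
      dist x y ≤ (1 + √d) * dist (toRd d fun i => a i + l / 2) y := by
  set x₀ := toRd d fun i => a i + l / 2
  obtain ⟨i, hi⟩ : ∃ i, l ≤ |y i - x₀ i| := by
    simp only [cubeO, mem_ofPred_eq, not_forall, not_and_or, not_lt] at hy
    obtain ⟨i, hi⟩ := hy
    refine ⟨i, ?_⟩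
    rw [toRd_apply, le_abs]
    rcases hi with hi | hi
    · right; linarith
    · left; linarith
  have hl : 0 < l := by linarith [(hx i).1, (hx i).2]
  have hxi : |x i - x₀ i| ≤ l / 2 := by
    rw [toRd_apply, abs_le]
    constructor <;> linarith [(hx i).1, (hx i).2]
  have hx₀y : l ≤ dist x₀ y := hi.trans (by rw [abs_sub_comm]; exact abs_apply_sub_le_dist x₀ y i)
  have hxy : l / 2 ≤ dist x y := by
    have := abs_apply_sub_le_dist y x i
    rw [dist_comm]
    linarith [abs_sub_le (y i) (x i) (x₀ i), abs_sub_comm (x i) (x₀ i)]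
  have hxx₀ := dist_center_le_of_mem_cubeO hl hx
  have hsqrt : 0 ≤ √(d : ℝ) := Real.sqrt_nonneg _
  have h1 : √d * (l / 2) ≤ √d * dist x y := by gcongr
  have h2 : √d * (l / 2) ≤ √d * dist x₀ y := by gcongr; linarith
  refine ⟨hx₀y, ?_, ?_⟩
  · linarith [dist_triangle x₀ x y, dist_comm x₀ x]
  · linarith [dist_triangle x x₀ y]

end Cubes

section Content

variable {d : ℕ} {β : ℝ}

lemma omegaConst_pos (hβ : -2 < β) : 0 < omegaConst β := by
  have := Real.Gamma_pos_of_pos (by linarith : 0 < β / 2 + 1)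
  unfold omegaConst
  positivity

lemma hContent_mono : Monotone (hContent d β) := fun _ _ h =>
  le_iInf₂ fun c hc => iInf₂_le c (h.trans hc)

lemma hContent_le_of_subset_ball (hβ : β ≠ 0) {E : Set (Rd d)} {z : Rd d} {r : ℝ}
    (h : E ⊆ Metric.ball z r) : hContent d β E ≤ ENNReal.ofReal (omegaConst β * r ^ β) := by
  refine iInf₂_le_of_le (fun i => if i = 0 then (z, r) else (z, 0)) ?_ ?_
  · exact h.trans (subset_iUnion_of_subset 0 (by simp))
  · rw [tsum_eq_single 0 fun i hi => by simp [hi, Real.zero_rpow hβ]]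
    simp

lemma hContent_empty (hβ : β ≠ 0) : hContent d β ∅ = 0 :=
  le_antisymm ((hContent_le_of_subset_ball hβ (empty_subset (Metric.ball 0 0))).trans
    (by simp [Real.zero_rpow hβ])) bot_le

lemma choquet_le_mul_of_forall_le {H : Set (Rd d) → ℝ≥0∞} (hH : Monotone H) (hH0 : H ∅ = 0)
    {Ω : Set (Rd d)} {g : Rd d → ℝ} {S : ℝ} (hg : ∀ x ∈ Ω, g x ≤ S) :
    choquet d H Ω g ≤ H Ω * ENNReal.ofReal S := by
  calc choquet d H Ω g ≤ ∫⁻ t in Ioi 0, (Iio S).indicator (fun _ => H Ω) t := by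
        refine lintegral_mono fun t => ?_
        by_cases ht : t ∈ Iio S
        · rw [indicator_of_mem ht]
          exact hH fun x hx => hx.1
        · rw [indicator_of_notMem ht, ← hH0]
          exact hH fun x hx => ht (hx.2.trans_le (hg x hx.1) : t < S)
    _ = H Ω * ENNReal.ofReal S := by
        rw [lintegral_indicator measurableSet_Iio, setLIntegral_const,
          Measure.restrict_apply measurableSet_Iio, Iio_inter_Ioi, Real.volume_Ioo, sub_zero]

lemma choquet_abs_sub_center_le_of_lipschitzOnWith (hd : 0 < d) (hβ : β ≠ 0) {a : Fin d → ℝ}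
    {l : ℝ} (hl : 0 < l) {g : Rd d → ℝ} {K : ℝ≥0} (hg : LipschitzOnWith K g (cubeO d a l)) :
    choquet d (hContent d β) (cubeO d a l) (fun y => |g y - g (toRd d fun i => a i + l / 2)|) ≤
      ENNReal.ofReal (omegaConst β * (√d * l) ^ β) * ENNReal.ofReal (K * (√d * (l / 2))) := by
  refine (choquet_le_mul_of_forall_le hContent_mono (hContent_empty hβ) fun x hx => ?_).trans
    (mul_le_mul_left (hContent_le_of_subset_ball hβ (cubeO_subset_ball hd hl)) _)
  rw [← Real.dist_eq]
  exact (hg.dist_le_mul x hx _ (center_mem_cubeO hl)).trans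
    (by gcongr; exact dist_center_le_of_mem_cubeO hl hx)

end Content

section FractionalMaximal

variable {d : ℕ} {α : ℝ} {f : Rd d → ℝ}

lemma lintegral_ball_le_fracMaxF (x : Rd d) {r : ℝ} (hr : 0 < r) :
    ∫⁻ y in Metric.ball x r, ENNReal.ofReal |f y| ≤
      ENNReal.ofReal ((2 * r) ^ ((d : ℝ) - α)) * fracMaxF d α f x := by
  have hx : x ∈ cubeSet d (fun i => x i - r) (2 * r) :=
    ball_subset_cubeSet x r (Metric.mem_ball_self hr)
  have hcube : (∫⁻ y in cubeSet d (fun i => x i - r) (2 * r), ENNReal.ofReal |f y|) *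
      ENNReal.ofReal ((2 * r) ^ (α - (d : ℝ))) ≤ fracMaxF d α f x :=
    le_iSup_of_le _ <| le_iSup_of_le (2 * r) <| le_iSup_of_le (by positivity) <|
      le_iSup_of_le hx le_rfl
  have hcancel : ENNReal.ofReal ((2 * r) ^ ((d : ℝ) - α)) *
      ENNReal.ofReal ((2 * r) ^ (α - (d : ℝ))) = 1 := by
    rw [← ENNReal.ofReal_mul (by positivity), ← Real.rpow_add (by positivity),
      sub_add_sub_cancel', sub_self, Real.rpow_zero, ENNReal.ofReal_one]
  calc ∫⁻ y in Metric.ball x r, ENNReal.ofReal |f y|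
      ≤ ∫⁻ y in cubeSet d (fun i => x i - r) (2 * r), ENNReal.ofReal |f y| :=
        lintegral_mono_set (ball_subset_cubeSet x r)
    _ = ENNReal.ofReal ((2 * r) ^ ((d : ℝ) - α)) *
        ((∫⁻ y in cubeSet d (fun i => x i - r) (2 * r), ENNReal.ofReal |f y|) *
          ENNReal.ofReal ((2 * r) ^ (α - (d : ℝ)))) := by
        rw [mul_left_comm, hcancel, mul_one]
    _ ≤ ENNReal.ofReal ((2 * r) ^ ((d : ℝ) - α)) * fracMaxF d α f x := by gcongr

lemma rpow_sub_one_mul_rpow_sub (s : ℝ) (hs : 0 < s) :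
    s ^ (α - d - 1) * (2 * (2 * s)) ^ ((d : ℝ) - α) = 4 ^ ((d : ℝ) - α) * s⁻¹ := by
  rw [← mul_assoc, show (2 : ℝ) * 2 = 4 by norm_num, Real.mul_rpow (by norm_num) hs.le,
    mul_left_comm, ← Real.rpow_add hs, show α - d - 1 + (d - α) = -1 by ring, Real.rpow_neg_one]

lemma lintegral_mul_rpow_dist_le_fracMaxF (hα : α ≤ d + 1) (hf : Measurable f) {x₀ : Rd d}
    {l : ℝ} (hl : 0 < l) (hfar : ∀ y, f y ≠ 0 → l ≤ dist x₀ y) :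
    ∫⁻ y, ENNReal.ofReal (|f y| * dist x₀ y ^ (α - d - 1)) ≤
      ENNReal.ofReal (2 * 4 ^ ((d : ℝ) - α) / l) * fracMaxF d α f x₀ := by
  have hpt : ∀ y, ENNReal.ofReal (|f y| * dist x₀ y ^ (α - d - 1)) ≤
      ∑' k : ℕ, (Metric.ball x₀ (2 * (2 ^ k * l))).indicator
        (fun y => ENNReal.ofReal ((2 ^ k * l) ^ (α - d - 1)) * ENNReal.ofReal |f y|) y := by
    intro y
    by_cases hy : f y = 0
    · simp [hy]
    -- dyadic scale of `y`: `2 ^ k * l ≤ dist x₀ y < 2 ^ (k + 1) * l`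
    obtain ⟨k, hk, hk'⟩ :=
      exists_nat_pow_near ((one_le_div hl).2 (hfar y hy)) (one_lt_two : (1 : ℝ) < 2)
    rw [le_div_iff₀ hl] at hk
    rw [div_lt_iff₀ hl, pow_succ] at hk'
    refine le_trans ?_ (ENNReal.le_tsum k)
    rw [indicator_of_mem (Metric.mem_ball'.2 (by linarith)), ← ENNReal.ofReal_mul (by positivity),
      mul_comm]
    gcongr ENNReal.ofReal (?_ * _)
    exact Real.rpow_le_rpow_of_nonpos (by positivity) hk (by linarith)
  have hterm : ∀ k : ℕ, ∫⁻ y in Metric.ball x₀ (2 * (2 ^ k * l)),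
      ENNReal.ofReal ((2 ^ k * l) ^ (α - d - 1)) * ENNReal.ofReal |f y| ≤
        ENNReal.ofReal (4 ^ ((d : ℝ) - α) / l) * 2⁻¹ ^ k * fracMaxF d α f x₀ := by
    intro k
    rw [lintegral_const_mul _ hf.abs.ennreal_ofReal]
    refine (mul_le_mul' le_rfl (lintegral_ball_le_fracMaxF (α := α) x₀
      (by positivity : (0 : ℝ) < 2 * (2 ^ k * l)))).trans_eq ?_
    rw [← mul_assoc, ← ENNReal.ofReal_mul (by positivity),
      rpow_sub_one_mul_rpow_sub _ (by positivity), ← ENNReal.inv_pow,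
      ← ENNReal.ofReal_ofNat 2, ← ENNReal.ofReal_pow zero_le_two,
      ← ENNReal.ofReal_inv_of_pos (by positivity), ← ENNReal.ofReal_mul (by positivity)]
    congr 2
    field_simp
  calc ∫⁻ y, ENNReal.ofReal (|f y| * dist x₀ y ^ (α - d - 1))
      ≤ ∫⁻ y, ∑' k : ℕ, (Metric.ball x₀ (2 * (2 ^ k * l))).indicator
          (fun y => ENNReal.ofReal ((2 ^ k * l) ^ (α - d - 1)) * ENNReal.ofReal |f y|) y :=
        lintegral_mono hpt
    _ = ∑' k : ℕ, ∫⁻ y in Metric.ball x₀ (2 * (2 ^ k * l)),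
          ENNReal.ofReal ((2 ^ k * l) ^ (α - d - 1)) * ENNReal.ofReal |f y| := by
        rw [lintegral_tsum fun k =>
          ((hf.abs.ennreal_ofReal.const_mul _).indicator measurableSet_ball).aemeasurable]
        simp_rw [lintegral_indicator measurableSet_ball]
    _ ≤ ∑' k : ℕ, ENNReal.ofReal (4 ^ ((d : ℝ) - α) / l) * 2⁻¹ ^ k * fracMaxF d α f x₀ :=
        ENNReal.tsum_le_tsum hterm
    _ = ENNReal.ofReal (2 * 4 ^ ((d : ℝ) - α) / l) * fracMaxF d α f x₀ := by
        rw [ENNReal.tsum_mul_right, ENNReal.tsum_mul_left, ENNReal.tsum_geometric,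
          ENNReal.one_sub_inv_two, inv_inv, mul_div_assoc, ENNReal.ofReal_mul zero_le_two,
          ENNReal.ofReal_ofNat, mul_comm (2 : ℝ≥0∞)]

lemma ofReal_integral_mul_rpow_dist_le_fracMaxF (hα : α ≤ d + 1) (hf : Measurable f)
    {a : Fin d → ℝ} {l : ℝ} (hl : 0 < l)
    (hsupp : Function.support f ⊆ (cubeO d (fun i => a i - l / 2) (2 * l))ᶜ) :
    ENNReal.ofReal (∫ y, |f y| * dist (toRd d fun i => a i + l / 2) y ^ (α - d - 1)) ≤
      ENNReal.ofReal (2 * 4 ^ ((d : ℝ) - α) / l) * fracMaxF d α f (toRd d fun i => a i + l / 2) :=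
  (ofReal_integral_le_lintegral_ofReal (Filter.Eventually.of_forall fun y => by positivity)).trans
    (lintegral_mul_rpow_dist_le_fracMaxF hα hf hl fun y hy =>
      (dist_comparable_of_mem_cubeO_of_notMem (center_mem_cubeO hl) (hsupp hy)).1)

end FractionalMaximal

section Riesz

variable {d : ℕ} {α : ℝ}

lemma rieszConst_pos (hα : 0 < α) (hαd : α < d) : 0 < rieszConst d α := by
  have := Real.Gamma_pos_of_pos (by linarith : 0 < α / 2)
  have := Real.Gamma_pos_of_pos (by linarith : 0 < ((d : ℝ) - α) / 2)
  unfold rieszConst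
  positivity

lemma dist_rieszR_le (hαd : α < d) {f : Rd d → ℝ} (hf : Measurable f) {a : Fin d → ℝ} {l : ℝ}
    (hl : 0 < l) (hsupp : Function.support f ⊆ (cubeO d (fun i => a i - l / 2) (2 * l))ᶜ)
    {x x' : Rd d} (hx : x ∈ cubeO d a l) (hx' : x' ∈ cubeO d a l) :
    dist (rieszR d α f x) (rieszR d α f x') ≤
      |rieszConst d α|⁻¹ * ((d - α) * (1 + √d) ^ (1 + d - α)) *
        (∫ y, |f y| * dist (toRd d fun i => a i + l / 2) y ^ (α - d - 1)) * dist x x' := by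
  have hcomp := fun z (hz : z ∈ cubeO d a l) y (hy : f y ≠ 0) =>
    dist_comparable_of_mem_cubeO_of_notMem hz (hsupp hy)
  have key := abs_integral_mul_rpow_dist_sub_le (μ := volume) hf (by positivity) hl
    (by linarith : α - d ≤ 0) (fun y hy => (hcomp x hx y hy).1)
    (fun z hz y hy => (hcomp z hz y hy).2) hx hx'
  rw [abs_of_nonpos (by linarith : α - (d : ℝ) ≤ 0), neg_sub,
    show 1 - (α - d) = 1 + (d : ℝ) - α by ring] at key
  unfold rieszR
  rw [mul_assoc _ _ (dist x x')] at key
  rw [Real.dist_eq, ← mul_sub, abs_mul, abs_inv, mul_assoc _ _ (dist x x'), mul_assoc]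
  exact mul_le_mul_of_nonneg_left key (by positivity)

end Riesz

theorem riesz_oscillation_estimate_general (d : ℕ) (α β : ℝ) (hα : 0 < α) (hαd : α < d)
    (hβ : 0 < β) :
    ∃ C : ℝ, 0 < C ∧
      ∀ (a : Fin d → ℝ) (l : ℝ), 0 < l →
        ∀ f : Rd d → ℝ, Measurable f →
          Function.support f ⊆ (cubeO d (fun i => a i - l / 2) (2 * l))ᶜ →
          MeasureTheory.LocallyIntegrable (rieszR d α f) MeasureTheory.volume →
          ContinuousOn (rieszR d α f) (cubeO d a l) ∧
          ∃ c : ℝ,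
            choquet d (hContent d β) (cubeO d a l) (fun y => |rieszR d α f y - c|) ≤
              ENNReal.ofReal (C * l ^ β) * fracMaxF d α f (toRd d fun i => a i + l / 2) := by
  have hd : 0 < d := by exact_mod_cast hα.trans hαd
  have hdα : 0 < (d : ℝ) - α := sub_pos.2 hαd
  have hκ := rieszConst_pos hα hαd
  have hω := omegaConst_pos (by linarith : -2 < β)
  have hsqrt : 0 < √(d : ℝ) := Real.sqrt_pos.2 (Nat.cast_pos.2 hd)
  set Λ := |rieszConst d α|⁻¹ * ((d - α) * (1 + √d) ^ (1 + d - α))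
  refine ⟨omegaConst β * √d ^ β * Λ * √d * 4 ^ ((d : ℝ) - α), by positivity,
    fun a l hl f hf hsupp _ => ?_⟩
  set x₀ := toRd d fun i => a i + l / 2
  set J := ∫ y, |f y| * dist x₀ y ^ (α - d - 1)
  have hJ0 : 0 ≤ J := integral_nonneg fun y => by positivity
  have hlip : LipschitzOnWith (Λ * J).toNNReal (rieszR d α f) (cubeO d a l) :=
    .of_dist_le_mul fun x hx x' hx' => by
      rw [Real.coe_toNNReal _ (by positivity)]
      exact dist_rieszR_le hαd hf hl hsupp hx hx'
  have hJ : ENNReal.ofReal J ≤ ENNReal.ofReal (2 * 4 ^ ((d : ℝ) - α) / l) * fracMaxF d α f x₀ :=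
    ofReal_integral_mul_rpow_dist_le_fracMaxF (by linarith) hf hl hsupp
  refine ⟨hlip.continuousOn, rieszR d α f x₀, ?_⟩
  calc choquet d (hContent d β) (cubeO d a l) (fun y => |rieszR d α f y - rieszR d α f x₀|)
      ≤ ENNReal.ofReal (omegaConst β * (√d * l) ^ β) *
          ENNReal.ofReal ((Λ * J).toNNReal * (√d * (l / 2))) :=
        choquet_abs_sub_center_le_of_lipschitzOnWith hd hβ.ne' hl hlip
    _ = ENNReal.ofReal (omegaConst β * (√d * l) ^ β * Λ * (√d * (l / 2))) * ENNReal.ofReal J := by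
        rw [Real.coe_toNNReal _ (by positivity), ← ENNReal.ofReal_mul (by positivity),
          ← ENNReal.ofReal_mul (by positivity)]
        ring_nf
    _ ≤ ENNReal.ofReal (omegaConst β * (√d * l) ^ β * Λ * (√d * (l / 2))) *
          (ENNReal.ofReal (2 * 4 ^ ((d : ℝ) - α) / l) * fracMaxF d α f x₀) := by gcongr
    _ = _ := by
        rw [← mul_assoc, ← ENNReal.ofReal_mul (by positivity), Real.mul_rpow (by positivity) hl.le]
        congr 2
        field_simp

/-- Oscillation estimate for Riesz potentials with data supported away from the cube. -/
theorem riesz_oscillation_estimate (d : ℕ) (α β : ℝ) (hα : 0 < α) (hαd : α < d)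
    (hβ : 0 < β) (hβd : β ≤ d) :
    ∃ C : ℝ, 0 < C ∧
      ∀ (a : Fin d → ℝ) (l : ℝ), 0 < l →
        ∀ f : Rd d → ℝ, Measurable f →
          Function.support f ⊆ (cubeO d (fun i => a i - l / 2) (2 * l))ᶜ →
          MeasureTheory.LocallyIntegrable (rieszR d α f) MeasureTheory.volume →
          ContinuousOn (rieszR d α f) (cubeO d a l) ∧
          ∃ c : ℝ,
            choquet d (hContent d β) (cubeO d a l) (fun y => |rieszR d α f y - c|) ≤
              ENNReal.ofReal (C * l ^ β) * fracMaxF d α f (toRd d fun i => a i + l / 2) :=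
  riesz_oscillation_estimate_general d α β hα hαd hβ
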